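/- arXiv:0706.2152 — 2 statements merged into one kernel-verified Lean document; each statement's English description precedes it below -/
import Mathlib

section
/- Let 0 → H → X → E → 0 be a short exact sequence of complex tori (H a subtorus of X, E = X/H). Then the induced sequence of dual tori 0 → E^∨ → X^∨ → H^∨ → 0 is exact. -/
/-- The dual lattice of a set `S` of periods: antilinear forms `α` with `Im(α γ) ∈ ℤ`
for all `γ ∈ S`. -/
noncomputable def dualLatticeOf (E : Type*) [NormedAddCommGroup E] [NormedSpace ℂ E]
    (S : Set E) : AddSubgroup (E →SL[starRingEnd ℂ] ℂ) where
  carrier := {α | ∀ γ ∈ S, ∃ k : ℤ, (α γ).im = (k : ℝ)}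
  zero_mem' := by intro γ _; exact ⟨0, by simp⟩
  add_mem' := by
    intro a b ha hb γ hγ
    obtain ⟨k, hk⟩ := ha γ hγ
    obtain ⟨l, hl⟩ := hb γ hγ
    exact ⟨k + l, by push_cast [ContinuousLinearMap.add_apply, Complex.add_im, hk, hl]; ring⟩
  neg_mem' := by
    intro a ha γ hγ
    obtain ⟨k, hk⟩ := ha γ hγ
    exact ⟨-k, by push_cast [ContinuousLinearMap.neg_apply, Complex.neg_im, hk]; ring⟩

/-- The subgroup of antilinear forms on `V` vanishing on the subspace `VH`; it is the
space `E^∨ = (V/V_H)^∨` of antilinear forms on the quotient, embedded in `V^∨`. -/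
noncomputable def vanishingOn (V : Type*) [NormedAddCommGroup V] [NormedSpace ℂ V]
    (VH : Submodule ℂ V) : AddSubgroup (V →SL[starRingEnd ℂ] ℂ) where
  carrier := {α | ∀ v ∈ VH, α v = 0}
  zero_mem' := by intro v _; simp
  add_mem' := by intro a b ha hb v hv; simp [ha v hv, hb v hv]
  neg_mem' := by intro a ha v hv; simp [ha v hv]

/-- Restriction of antilinear forms on `V` to the subspace `VH`, as an additive
homomorphism `V^∨ →+ V_H^∨`. -/
noncomputable def restrictForms (V : Type*) [NormedAddCommGroup V] [NormedSpace ℂ V]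
    (VH : Submodule ℂ V) :
    (V →SL[starRingEnd ℂ] ℂ) →+ (VH →SL[starRingEnd ℂ] ℂ) :=
  AddMonoidHom.mk' (fun α => α.comp VH.subtypeL) (by intro a b; ext v; rfl)

/-!
An antilinear form `α` on `V` is determined by its imaginary part, since
`Re α(v) = -Im α(I v)`, and every real linear form is such an imaginary part. So `V^∨` is
the real dual of `V`, `Γ^∨` consists of the real forms that are integral on `Γ`, and restriction
`V^∨ → V_H^∨` is onto. The only real point is exactness in the middle: a form whose restriction
is integral on `Γ_H = Γ ∩ V_H` must be corrected by an element of `Γ^∨` to one vanishing on `V_H`.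
Since `Γ/Γ_H` is torsion-free, hence free, `Γ_H` is a direct summand of `Γ`, so the integral
functional on `Γ_H` extends to an integral functional on `Γ`; a `ℤ`-basis of `Γ` is an
`ℝ`-basis of `V`, and `Γ_H` spans `V_H`, so this functional is the restriction of a real form
on `V` that agrees with the given one on `V_H`.
-/

theorem Submodule.exists_retraction_of_isTorsionFree_quotient {R M : Type*} [CommRing R]
    [IsDomain R] [IsPrincipalIdealRing R] [AddCommGroup M] [Module R M] [Module.Finite R M]
    (N : Submodule R M) [Module.IsTorsionFree R (M ⧸ N)] :
    ∃ r : M →ₗ[R] N, ∀ x : N, r x = x := by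
  obtain ⟨s, hs⟩ := N.mkQ.exists_rightInverse_of_surjective N.range_mkQ
  have hmem : ∀ x, x - s (N.mkQ x) ∈ N := fun x => by
    rw [← Submodule.Quotient.mk_eq_zero, ← N.mkQ_apply, map_sub, ← LinearMap.comp_apply, hs,
      LinearMap.id_apply, sub_self]
  refine ⟨LinearMap.codRestrict N (LinearMap.id - s ∘ₗ N.mkQ) hmem, fun x => ?_⟩
  ext
  simp [(Submodule.Quotient.mk_eq_zero N).2 x.2]

theorem isTorsionFree_quotient_comap_restrictScalars {K E : Type*} [Field K] [CharZero K]
    [AddCommGroup E] [Module K E] (L : Submodule ℤ E) (W : Submodule K E) :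
    Module.IsTorsionFree ℤ (L ⧸ (W.restrictScalars ℤ).comap L.subtype) := by
  refine .of_smul_eq_zero fun c x hcx => or_iff_not_imp_left.2 fun hc => ?_
  obtain ⟨y, rfl⟩ := Submodule.Quotient.mk_surjective _ x
  rw [← Submodule.Quotient.mk_smul, Submodule.Quotient.mk_eq_zero] at hcx
  rw [Submodule.Quotient.mk_eq_zero]
  have : (c : K) • (y : E) ∈ W := by rw [Int.cast_smul_eq_zsmul]; exact hcx
  simpa [smul_smul, hc] using W.smul_mem (c : K)⁻¹ this

theorem ZLattice.exists_extend {E : Type*} [NormedAddCommGroup E] [NormedSpace ℝ E]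
    [FiniteDimensional ℝ E] (L : Submodule ℤ E) [DiscreteTopology L] [IsZLattice ℝ L]
    {M : Type*} [AddCommGroup M] [Module ℝ M] (φ : L →ₗ[ℤ] M) :
    ∃ f : E →ₗ[ℝ] M, ∀ x : L, f x = φ x := by
  let b := Module.Free.chooseBasis ℤ L
  refine ⟨(b.ofZLatticeBasis ℝ L).constr ℝ (φ ∘ b), fun x => ?_⟩
  have : ((b.ofZLatticeBasis ℝ L).constr ℝ (φ ∘ b)).restrictScalars ℤ ∘ₗ L.subtype = φ :=
    b.ext fun i => by
      rw [LinearMap.comp_apply, L.subtype_apply, ← b.ofZLatticeBasis_apply ℝ L,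
        LinearMap.restrictScalars_apply, Module.Basis.constr_basis, Function.comp_apply]
  exact LinearMap.congr_fun this x

theorem ZLattice.exists_intValued_extension {E : Type*} [NormedAddCommGroup E]
    [NormedSpace ℝ E] [FiniteDimensional ℝ E] (L : Submodule ℤ E) [DiscreteTopology L]
    [IsZLattice ℝ L] (W : Submodule ℝ E) (hW : Submodule.span ℝ {w : W | (w : E) ∈ L} = ⊤)
    (g : E →ₗ[ℝ] ℝ) (hg : ∀ x ∈ L, x ∈ W → ∃ k : ℤ, g x = k) :
    ∃ f : E →ₗ[ℝ] ℝ, (∀ x ∈ L, ∃ k : ℤ, f x = k) ∧ ∀ w ∈ W, f w = g w := by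
  let N := (W.restrictScalars ℤ).comap L.subtype
  have := isTorsionFree_quotient_comap_restrictScalars L W
  obtain ⟨r, hr⟩ := N.exists_retraction_of_isTorsionFree_quotient
  obtain ⟨f, hf⟩ := ZLattice.exists_extend L (g.restrictScalars ℤ ∘ₗ L.subtype ∘ₗ N.subtype ∘ₗ r)
  have hfN : ∀ x : L, x ∈ N → f x = g x := fun x hx => by simp [hf, hr ⟨x, hx⟩]
  refine ⟨f, fun x hx => ?_, fun w hw => ?_⟩
  · rw [show x = ((⟨x, hx⟩ : L) : E) from rfl, hf]
    exact hg _ (r ⟨x, hx⟩ : L).2 (r ⟨x, hx⟩).2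
  · have : f ∘ₗ W.subtype = g ∘ₗ W.subtype :=
      LinearMap.ext_on hW fun v hv => hfN ⟨v, hv⟩ v.2
    exact LinearMap.congr_fun this ⟨w, hw⟩

section AntilinearForm

open Complex

variable {E : Type*} [NormedAddCommGroup E] [NormedSpace ℂ E]

theorem antilinearForm_apply_eq_im (α : E →SL[starRingEnd ℂ] ℂ) (v : E) :
    α v = -(α (I • v)).im + (α v).im * I := by
  rw [map_smulₛₗ, conj_I]
  apply Complex.ext <;> simp

theorem antilinearForm_ext_im {α β : E →SL[starRingEnd ℂ] ℂ}
    (h : ∀ v, (α v).im = (β v).im) : α = β := by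
  ext v
  rw [antilinearForm_apply_eq_im α, antilinearForm_apply_eq_im β, h, h]

theorem antilinearForm_eq_zero_of_im_eq_zero {α : E →SL[starRingEnd ℂ] ℂ} {S : Submodule ℂ E}
    (h : ∀ v ∈ S, (α v).im = 0) : ∀ v ∈ S, α v = 0 := fun v hv => by
  rw [antilinearForm_apply_eq_im α, h v hv, h _ (S.smul_mem I hv)]
  simp

noncomputable def imPart (α : E →SL[starRingEnd ℂ] ℂ) : E →ₗ[ℝ] ℝ where
  toFun v := (α v).im
  map_add' v w := by simp
  map_smul' c v := by
    rw [← algebraMap_smul ℂ c v, map_smulₛₗ]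
    simp

@[simp]
theorem imPart_apply (α : E →SL[starRingEnd ℂ] ℂ) (v : E) : imPart α v = (α v).im := rfl

noncomputable def antilinearFormOfIm [FiniteDimensional ℂ E] (f : E →ₗ[ℝ] ℝ) :
    E →SL[starRingEnd ℂ] ℂ where
  toFun v := -f (I • v) + f v * I
  map_add' v w := by
    simp only [smul_add, map_add]
    push_cast
    ring
  map_smul' c v := by
    have h1 : c • v = c.re • v + c.im • (I • v) := by
      match_scalars
      simp
    have h2 : I • c • v = (-c.im) • v + c.re • (I • v) := by
      match_scalars
      simp [Complex.ext_iff]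
    rw [h2, h1]
    apply Complex.ext <;> simp
  cont := by
    have : Continuous f := f.continuous_of_finiteDimensional
    fun_prop

@[simp]
theorem im_antilinearFormOfIm [FiniteDimensional ℂ E] (f : E →ₗ[ℝ] ℝ) (v : E) :
    (antilinearFormOfIm f v).im = f v := by
  simp [antilinearFormOfIm]

end AntilinearForm

@[simp]
theorem restrictForms_apply {V : Type*} [NormedAddCommGroup V] [NormedSpace ℂ V]
    {VH : Submodule ℂ V} (α : V →SL[starRingEnd ℂ] ℂ) (v : VH) : restrictForms V VH α v = α v :=
  rfl

theorem restrictForms_surjective (V : Type*) [NormedAddCommGroup V] [NormedSpace ℂ V]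
    [FiniteDimensional ℂ V] (VH : Submodule ℂ V) : Function.Surjective (restrictForms V VH) := by
  intro β
  obtain ⟨f, hf⟩ := LinearMap.exists_extend (p := VH.restrictScalars ℝ) (imPart β)
  refine ⟨antilinearFormOfIm f, antilinearForm_ext_im fun v => ?_⟩
  rw [restrictForms_apply, im_antilinearFormOfIm]
  exact LinearMap.congr_fun hf v

theorem exists_mem_dualLatticeOf_sub_mem_vanishingOn
    (V : Type*) [NormedAddCommGroup V] [NormedSpace ℂ V] [FiniteDimensional ℂ V]
    (VH : Submodule ℂ V) (Γ : Submodule ℤ V) [DiscreteTopology Γ]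
    (hspan : Submodule.span ℝ (Γ : Set V) = ⊤)
    (hΓH : Submodule.span ℝ {v : VH | (v : V) ∈ Γ} = ⊤) {α : V →SL[starRingEnd ℂ] ℂ}
    (hα : restrictForms V VH α ∈ dualLatticeOf VH {v : VH | (v : V) ∈ Γ}) :
    ∃ β ∈ dualLatticeOf V (Γ : Set V), α - β ∈ vanishingOn V VH := by
  have : IsZLattice ℝ Γ := ⟨hspan⟩
  obtain ⟨f, hfΓ, hfVH⟩ := ZLattice.exists_intValued_extension Γ (VH.restrictScalars ℝ) hΓH
    (imPart α) fun x hx hxVH => hα ⟨x, hxVH⟩ hx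
  refine ⟨antilinearFormOfIm f, fun γ hγ => by simpa using hfΓ γ hγ,
    antilinearForm_eq_zero_of_im_eq_zero fun v hv => ?_⟩
  simp [hfVH v hv]

/-- Let `0 → H → X → E → 0` be a short exact sequence of complex tori,
`H = V_H/Γ_H ⊂ X = V/Γ`, `E = X/H`.  Then the dual sequence `0 → E^∨ → X^∨ → H^∨ → 0` is
exact.  Here `X^∨ = V^∨/Γ^∨`, `H^∨ = V_H^∨/Γ_H^∨`, and `E^∨` is realized as the quotient of
the forms vanishing on `V_H` by those of them lying in `Γ^∨`; the maps are induced by the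
inclusion and by restriction of forms.  Exactness: the first map is injective, the second is
surjective, and the image of the first equals the kernel of the second. -/
theorem dual_torus_sequence_exact
    (V : Type*) [NormedAddCommGroup V] [NormedSpace ℂ V] [FiniteDimensional ℂ V]
    (VH : Submodule ℂ V)
    (Γ : Submodule ℤ V) [DiscreteTopology Γ]
    (hspan : Submodule.span ℝ (Γ : Set V) = ⊤)
    (hΓH : Submodule.span ℝ {v : VH | (v : V) ∈ Γ} = ⊤) :
    Function.Injective
      (QuotientAddGroup.map
        ((dualLatticeOf V (Γ : Set V)).addSubgroupOf (vanishingOn V VH))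
        (dualLatticeOf V (Γ : Set V))
        (vanishingOn V VH).subtype
        (by intro x hx; exact hx)) ∧
    Function.Surjective
      (QuotientAddGroup.map
        (dualLatticeOf V (Γ : Set V))
        (dualLatticeOf VH {v : VH | (v : V) ∈ Γ})
        (restrictForms V VH)
        (by intro α hα γ hγ; exact hα _ hγ)) ∧
    AddMonoidHom.range
      (QuotientAddGroup.map
        ((dualLatticeOf V (Γ : Set V)).addSubgroupOf (vanishingOn V VH))
        (dualLatticeOf V (Γ : Set V))
        (vanishingOn V VH).subtype
        (by intro x hx; exact hx)) =
    AddMonoidHom.ker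
      (QuotientAddGroup.map
        (dualLatticeOf V (Γ : Set V))
        (dualLatticeOf VH {v : VH | (v : V) ∈ Γ})
        (restrictForms V VH)
        (by intro α hα γ hγ; exact hα _ hγ)) := by
  refine ⟨?injective, ?surjective, ?exact⟩
  case injective =>
    rw [injective_iff_map_eq_zero]
    intro x hx
    obtain ⟨α, rfl⟩ := QuotientAddGroup.mk_surjective x
    exact (QuotientAddGroup.eq_zero_iff _).2 ((QuotientAddGroup.eq_zero_iff α.1).1 hx)
  case surjective =>
    exact QuotientAddGroup.map_surjective_of_surjective _ _ _
      (QuotientAddGroup.mk_surjective.comp (restrictForms_surjective V VH)) _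
  case exact =>
    ext x
    constructor
    · rintro ⟨y, rfl⟩
      obtain ⟨β, rfl⟩ := QuotientAddGroup.mk_surjective y
      refine (QuotientAddGroup.eq_zero_iff _).2 ?_
      have hβ : restrictForms V VH β = 0 := by
        ext v
        exact β.2 v v.2
      rw [(vanishingOn V VH).subtype_apply, hβ]
      exact zero_mem _
    · obtain ⟨α, rfl⟩ := QuotientAddGroup.mk_surjective x
      intro hα
      obtain ⟨β, hβ, hαβ⟩ := exists_mem_dualLatticeOf_sub_mem_vanishingOn V VH Γ hspan hΓH
        ((QuotientAddGroup.eq_zero_iff _).1 hα)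
      exact ⟨(⟨α - β, hαβ⟩ : vanishingOn V VH), QuotientAddGroup.eq.2 (by simpa using hβ)⟩
end

section
/- Let W be a finite group acting on a set, and suppose to each g ∈ W and each 'bundle label' w ∈ W we assign F_g^w ∈ Hom(V, A) (A a commutative algebra) such that F_g^w = 0 unless g is a reflection, and the symmetry Σ_{hg=k} ⟨F_g^1, v⟩⟨F_h^g, gu⟩ = Σ_{hg=k} ⟨F_g^1, u⟩⟨F_h^g, gv⟩ holds for all k. If moreover for each reflection g the linear functional v ↦ ⟨F_g^w, v⟩ vanishes on ker(1−g), then also Σ_{hg=k} ⟨F_g^1, v⟩⟨F_h^g, u⟩ = Σ_{hg=k} ⟨F_g^1, u⟩⟨F_h^g, v⟩ for all k ∈ W. -/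
open Finset

/-!
For a reflection `g`, split `u = g u + (u - g u)`. The terms with `g u` are symmetric by
hypothesis, and what remains, `(u, v) ↦ ⟨F_g¹, v⟩⟨F_h^g, u - g u⟩ - ⟨F_g¹, u⟩⟨F_h^g, v - g v⟩`,
is built from functionals vanishing on the hyperplane `ker(1 - g)`. Any two such functionals are
proportional on `V`, so this skew form is zero.
-/

namespace LinearMap

variable {K V V' A : Type*} [Field K] [AddCommGroup V] [Module K V] [AddCommGroup V']
  [Module K V']

theorem exists_sub_smul_mem_ker_of_finrank_range_eq_one (T : V →ₗ[K] V')
    (hT : Module.finrank K (range T) = 1) : ∃ e : V, ∀ x : V, ∃ c : K, x - c • e ∈ ker T := by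
  obtain ⟨⟨_, e, rfl⟩, -, hspan⟩ := finrank_eq_one_iff'.mp hT
  refine ⟨e, fun x => ?_⟩
  obtain ⟨c, hc⟩ := hspan ⟨T x, mem_range_self T x⟩
  refine ⟨c, ?_⟩
  rw [mem_ker, map_sub, map_smul, sub_eq_zero]
  exact (congrArg Subtype.val hc).symm

variable [CommRing A] [Algebra K A]

theorem mul_comm_apply_of_ker_le_of_finrank_range_eq_one (T : V →ₗ[K] V')
    (hT : Module.finrank K (range T) = 1) {φ ψ : V →ₗ[K] A} (hφ : ker T ≤ ker φ)
    (hψ : ker T ≤ ker ψ) (u v : V) : φ v * ψ u = φ u * ψ v := by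
  obtain ⟨e, he⟩ := exists_sub_smul_mem_ker_of_finrank_range_eq_one T hT
  have proportional : ∀ x : V, ∃ c : K, φ x = c • φ e ∧ ψ x = c • ψ e := by
    intro x
    obtain ⟨c, hc⟩ := he x
    refine ⟨c, ?_, ?_⟩
    · simpa [sub_eq_zero] using hφ hc
    · simpa [sub_eq_zero] using hψ hc
  obtain ⟨cu, hφu, hψu⟩ := proportional u
  obtain ⟨cv, hφv, hψv⟩ := proportional v
  rw [hφu, hψu, hφv, hψv, smul_mul_smul_comm, smul_mul_smul_comm, mul_comm cv]

end LinearMap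

theorem symmetry_transfer_for_reflection_families_general
    (V : Type*) [AddCommGroup V] [Module ℂ V]
    (A : Type*) [CommRing A] [Algebra ℂ A]
    (W : Type*) [Group W] [Fintype W]
    (ρ : W →* (V ≃ₗ[ℂ] V))
    (F : W → W → (V →ₗ[ℂ] A))
    (hsupp : ∀ w g : W,
      Module.finrank ℂ (LinearMap.range (1 - (ρ g : V →ₗ[ℂ] V))) ≠ 1 → F w g = 0)
    (hker : ∀ (w g : W) (v : V), ρ g v = v → F w g v = 0)
    (hiii : ∀ (k : W) (u v : V),
      ∑ g : W, F 1 g v * F g (k * g⁻¹) (ρ g u) = ∑ g : W, F 1 g u * F g (k * g⁻¹) (ρ g v)) :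
    ∀ (k : W) (u v : V),
      ∑ g : W, F 1 g v * F g (k * g⁻¹) u = ∑ g : W, F 1 g u * F g (k * g⁻¹) v := by
  intro k u v
  have remainder_symm : ∀ g : W,
      F 1 g v * F g (k * g⁻¹) (u - ρ g u) = F 1 g u * F g (k * g⁻¹) (v - ρ g v) := by
    intro g
    by_cases hg : Module.finrank ℂ (LinearMap.range (1 - (ρ g : V →ₗ[ℂ] V))) = 1
    · have hφ : LinearMap.ker (1 - (ρ g : V →ₗ[ℂ] V)) ≤ LinearMap.ker (F 1 g) := fun x hx =>
        hker 1 g x (sub_eq_zero.mp hx).symm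
      exact LinearMap.mul_comm_apply_of_ker_le_of_finrank_range_eq_one _ hg hφ
        (LinearMap.ker_le_ker_comp _ (F g (k * g⁻¹))) u v
    · simp [hsupp 1 g hg]
  have split : ∀ a b : V, ∑ g : W, F 1 g a * F g (k * g⁻¹) b
      = ∑ g : W, F 1 g a * F g (k * g⁻¹) (ρ g b)
        + ∑ g : W, F 1 g a * F g (k * g⁻¹) (b - ρ g b) := by
    intro a b
    rw [← sum_add_distrib]
    refine sum_congr rfl fun g _ => ?_
    rw [← mul_add, ← map_add, add_sub_cancel]
  rw [split v u, split u v, hiii k u v, sum_congr rfl fun g _ => remainder_symm g]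

/-- Lemma 5.2(iv) of the paper.  Let `W` be a finite group acting linearly
on `V` via `ρ`, `A` a commutative algebra, and `F w g : V →ₗ ℂ → A` families with `F w g = 0`
unless `g` is a reflection (i.e. unless `Im(1 − ρ g)` is one-dimensional), vanishing on
`ker(1 − ρ g)`.  If the symmetry
`Σ_{hg=k} ⟨F_g¹, v⟩⟨F_h^g, gu⟩ = Σ_{hg=k} ⟨F_g¹, u⟩⟨F_h^g, gv⟩` holds for all `k`, then also
`Σ_{hg=k} ⟨F_g¹, v⟩⟨F_h^g, u⟩ = Σ_{hg=k} ⟨F_g¹, u⟩⟨F_h^g, v⟩` for all `k`. -/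
theorem symmetry_transfer_for_reflection_families
    (V : Type*) [AddCommGroup V] [Module ℂ V] [FiniteDimensional ℂ V]
    (A : Type*) [CommRing A] [Algebra ℂ A]
    (W : Type*) [Group W] [Fintype W]
    (ρ : W →* (V ≃ₗ[ℂ] V))
    (F : W → W → (V →ₗ[ℂ] A))
    (hsupp : ∀ w g : W,
      Module.finrank ℂ (LinearMap.range (1 - (ρ g : V →ₗ[ℂ] V))) ≠ 1 → F w g = 0)
    (hker : ∀ (w g : W) (v : V), ρ g v = v → F w g v = 0)
    (hiii : ∀ (k : W) (u v : V),
      ∑ g : W, F 1 g v * F g (k * g⁻¹) (ρ g u) = ∑ g : W, F 1 g u * F g (k * g⁻¹) (ρ g v)) :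
    ∀ (k : W) (u v : V),
      ∑ g : W, F 1 g v * F g (k * g⁻¹) u = ∑ g : W, F 1 g u * F g (k * g⁻¹) v :=
  symmetry_transfer_for_reflection_families_general V A W ρ F hsupp hker hiii
end
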